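/- Let p,q,r∈(1,∞) with 1/p + 1/q = 1 + 1/r and let β∈(0,1]. For any f∈L_p(0,∞) and any measurable g with ‖g‖_{L_q^{0,β}} = (∫₀^∞ |g(v)|^q K₀(βv) dv)^{1/q} < ∞, the convolution f⋆g is well-defined, belongs to L_r(0,∞), and ‖f⋆g‖_{L_r(0,∞)} ≤ 2^{1/q}·‖f‖_{L_p(0,∞)}·‖g‖_{L_q^{0,β}}. -/

import Mathlib

open MeasureTheory Real Set

/-- The kernel function φ(x,u,v). -/
noncomputable def phiKer (x u v : ℝ) : ℝ :=
  Real.exp (-v * Real.cosh (x + u - 1)) + Real.exp (-v * Real.cosh (x - u + 1))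
    - Real.exp (-v * Real.cosh (x + u + 1)) - Real.exp (-v * Real.cosh (x - u - 1))

/-- The modified Bessel function of the second kind of order zero. -/
noncomputable def K0 (v : ℝ) : ℝ := ∫ t in Set.Ioi (0 : ℝ), Real.exp (-v * Real.cosh t)

/-- The trigonometric-weighted generalized convolution (f ⋆ g). -/
noncomputable def gconv (f g : ℝ → ℝ) (x : ℝ) : ℝ :=
  (1 / 4) * ∫ v in Set.Ioi (0 : ℝ), ∫ u in Set.Ioi (0 : ℝ), phiKer x u v * f u * g v

/-- Fourier cosine transform. -/
noncomputable def Fc (f : ℝ → ℝ) (y : ℝ) : ℝ :=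
  Real.sqrt (2 / Real.pi) * ∫ x in Set.Ioi (0 : ℝ), f x * Real.cos (x * y)

/-- Fourier sine transform. -/
noncomputable def Fs (f : ℝ → ℝ) (y : ℝ) : ℝ :=
  Real.sqrt (2 / Real.pi) * ∫ x in Set.Ioi (0 : ℝ), f x * Real.sin (x * y)

/-- Modified Bessel function K_{iy}(x). -/
noncomputable def Kiy (y x : ℝ) : ℝ :=
  ∫ u in Set.Ioi (0 : ℝ), Real.exp (-x * Real.cosh u) * Real.cos (y * u)

/-- Kontorovich–Lebedev transform. -/
noncomputable def KL (g : ℝ → ℝ) (y : ℝ) : ℝ := ∫ x in Set.Ioi (0 : ℝ), Kiy y x * g x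

/-- Fourier cosine convolution. -/
noncomputable def fcConv (f g : ℝ → ℝ) (x : ℝ) : ℝ :=
  (1 / Real.sqrt (2 * Real.pi)) * ∫ u in Set.Ioi (0 : ℝ), f u * (g |x - u| + g (x + u))

/-- Fourier sine–cosine generalized convolution. -/
noncomputable def fscConv (f g : ℝ → ℝ) (x : ℝ) : ℝ :=
  (1 / Real.sqrt (2 * Real.pi)) * ∫ u in Set.Ioi (0 : ℝ), f u * (g |x - u| - g (x + u))

open scoped ENNReal

/-!
Young's inequality for a kernel form `∫∫ K(x,u,v) F(u) G(v)` follows from Hölder's inequality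
in `(u,v)` with three factors, after writing
`K F G = (K F^p G^q)^(1/r) (K F^p)^(1-1/q) (K G^q)^(1-1/p)`: it only needs the mass of `K` in
`v` to be at most `a`, and its masses in `u` and in `x` to be at most a weight `w(v)`; the
constant is then `a^(1-1/q)`, with `w` entering the norm of `G`.

For `K = |φ|/4` each of the four exponentials in `φ(x,u,v)` is a translate, in `u` or in `x`,
of `exp(-v cosh t) ≤ exp(-βv cosh t)`, whose integral over `ℝ` is `2 K₀(βv)`; this gives
`w(v) = 2 K₀(βv)`. In `v`, `exp(-v cosh s) ≤ exp(-v)` gives `a = 1`, so the constant is `2^(1/q)`.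
-/

section YoungExponents

variable {p q r : ℝ}

lemma young_exponents_nonneg (hp : 1 ≤ p) (hq : 1 ≤ q) (hr : 0 < r) :
    0 ≤ 1 / r ∧ 0 ≤ 1 - 1 / q ∧ 0 ≤ 1 - 1 / p := by
  refine ⟨by positivity, ?_, ?_⟩ <;>
  · rw [sub_nonneg, div_le_one (by linarith)]; assumption

lemma ENNReal.mul_mul_eq_rpow_mul_rpow_mul_rpow (hp : 1 ≤ p) (hq : 1 ≤ q) (hr : 0 < r)
    (hpqr : 1 / p + 1 / q = 1 + 1 / r) (k x y : ℝ≥0∞) :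
    k * x * y = (k * x ^ p * y ^ q) ^ (1 / r) * (k * x ^ p) ^ (1 - 1 / q) *
      (k * y ^ q) ^ (1 - 1 / p) := by
  obtain ⟨h₁, h₂, h₃⟩ := young_exponents_nonneg hp hq hr
  have pow_split (z : ℝ≥0∞) {s e e' : ℝ} (hs : 0 ≤ s) (he : 0 ≤ e) (he' : 0 ≤ e')
      (h : s * (e + e') = 1) : z = z ^ (s * e) * z ^ (s * e') := by
    rw [← ENNReal.rpow_add_of_nonneg _ _ (mul_nonneg hs he) (mul_nonneg hs he'), ← mul_add, h,
      ENNReal.rpow_one]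
  have hk : k = k ^ (1 / r) * k ^ (1 - 1 / q) * k ^ (1 - 1 / p) := by
    rw [← ENNReal.rpow_add_of_nonneg _ _ h₁ h₂, ← ENNReal.rpow_add_of_nonneg _ _ (by positivity) h₃]
    convert (ENNReal.rpow_one k).symm using 2
    linarith
  have hx := pow_split x (s := p) (by linarith) h₁ h₂
    (by rw [show 1 / r + (1 - 1 / q) = 1 / p by linarith]; field_simp)
  have hy := pow_split y (s := q) (by linarith) h₁ h₃
    (by rw [show 1 / r + (1 - 1 / p) = 1 / q by linarith]; field_simp)
  simp only [ENNReal.mul_rpow_of_nonneg _ _ h₁, ENNReal.mul_rpow_of_nonneg _ _ h₂,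
    ENNReal.mul_rpow_of_nonneg _ _ h₃, ← ENNReal.rpow_mul]
  conv_lhs => rw [hk, hx, hy]
  ring

lemma ENNReal.lintegral_rpow_mul_rpow_mul_rpow_le {α : Type*} [MeasurableSpace α] {m : Measure α}
    {f g h : α → ℝ≥0∞} (hf : AEMeasurable f m) (hg : AEMeasurable g m) (hh : AEMeasurable h m)
    {a b c : ℝ} (ha : 0 ≤ a) (hb : 0 ≤ b) (hc : 0 ≤ c) (habc : a + b + c = 1) :
    ∫⁻ z, f z ^ a * g z ^ b * h z ^ c ∂m ≤
      (∫⁻ z, f z ∂m) ^ a * (∫⁻ z, g z ∂m) ^ b * (∫⁻ z, h z ∂m) ^ c := by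
  have := ENNReal.lintegral_prod_norm_pow_le (μ := m) Finset.univ (f := ![f, g, h])
    (p := ![a, b, c]) (fun i _ => by fin_cases i <;> assumption)
    (by simpa [Fin.sum_univ_three, add_assoc] using habc)
    (fun i _ => by fin_cases i <;> assumption)
  simpa [Fin.prod_univ_three, mul_assoc] using this

lemma lintegral_mul_mul_le_young {α : Type*} [MeasurableSpace α] {m : Measure α}
    {k F G : α → ℝ≥0∞} (hk : AEMeasurable k m) (hF : AEMeasurable F m) (hG : AEMeasurable G m)
    (hp : 1 ≤ p) (hq : 1 ≤ q) (hr : 0 < r) (hpqr : 1 / p + 1 / q = 1 + 1 / r) :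
    ∫⁻ z, k z * F z * G z ∂m ≤
      (∫⁻ z, k z * F z ^ p * G z ^ q ∂m) ^ (1 / r) * (∫⁻ z, k z * F z ^ p ∂m) ^ (1 - 1 / q) *
        (∫⁻ z, k z * G z ^ q ∂m) ^ (1 - 1 / p) := by
  obtain ⟨h₁, h₂, h₃⟩ := young_exponents_nonneg hp hq hr
  rw [lintegral_congr fun z => ENNReal.mul_mul_eq_rpow_mul_rpow_mul_rpow hp hq hr hpqr (k z) _ _]
  exact ENNReal.lintegral_rpow_mul_rpow_mul_rpow_le (by fun_prop) (by fun_prop) (by fun_prop)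
    h₁ h₂ h₃ (by linarith)

end YoungExponents

section KernelYoung

variable {X U V : Type*} [MeasurableSpace X] [MeasurableSpace U] [MeasurableSpace V]
  {ρ : Measure X} {μ : Measure U} {ν : Measure V}
  {K : X × U × V → ℝ≥0∞} {F : U → ℝ≥0∞} {G w : V → ℝ≥0∞}

lemma lintegral_lintegral_kernel_mul_right_le (hK : Measurable K)
    (hKu : ∀ᵐ v ∂ν, ∀ x, ∫⁻ u, K (x, u, v) ∂μ ≤ w v) (x : X) :
    ∫⁻ v, ∫⁻ u, K (x, u, v) * G v ∂μ ∂ν ≤ ∫⁻ v, G v * w v ∂ν := by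
  refine lintegral_mono_ae (hKu.mono fun v hv => ?_)
  rw [lintegral_mul_const _ (by fun_prop), mul_comm (G v)]
  exact mul_le_mul_left (hv x) _

variable [SFinite ρ] [SFinite μ] [SFinite ν]

lemma lintegral_lintegral_kernel_mul_left_le {a : ℝ≥0∞} (hK : Measurable K) (hF : Measurable F)
    (hKv : ∀ x u, ∫⁻ v, K (x, u, v) ∂ν ≤ a) (x : X) :
    ∫⁻ v, ∫⁻ u, K (x, u, v) * F u ∂μ ∂ν ≤ a * ∫⁻ u, F u ∂μ := by
  rw [lintegral_lintegral_swap (by fun_prop), ← lintegral_const_mul a hF]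
  refine lintegral_mono fun u => ?_
  rw [lintegral_mul_const _ (by fun_prop)]
  exact mul_le_mul_left (hKv x u) _

lemma lintegral_lintegral_lintegral_kernel_le (hK : Measurable K) (hF : Measurable F)
    (hG : Measurable G) (hw : Measurable w) (hKx : ∀ᵐ v ∂ν, ∀ u, ∫⁻ x, K (x, u, v) ∂ρ ≤ w v) :
    ∫⁻ x, ∫⁻ v, ∫⁻ u, K (x, u, v) * F u * G v ∂μ ∂ν ∂ρ ≤
      (∫⁻ u, F u ∂μ) * ∫⁻ v, G v * w v ∂ν := by
  rw [lintegral_lintegral_swap (by fun_prop), mul_comm, ← lintegral_mul_const _ (by fun_prop)]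
  refine lintegral_mono_ae (hKx.mono fun v hv => ?_)
  rw [lintegral_lintegral_swap (by fun_prop), ← lintegral_const_mul _ hF]
  refine lintegral_mono fun u => ?_
  calc ∫⁻ x, K (x, u, v) * F u * G v ∂ρ = (∫⁻ x, K (x, u, v) ∂ρ) * (F u * G v) := by
        rw [← lintegral_mul_const _ (by fun_prop)]; simp only [mul_assoc]
    _ ≤ w v * (F u * G v) := mul_le_mul_left (hv u) _
    _ = G v * w v * F u := by ring

lemma lintegral_lintegral_kernel_mul_mul_le {a : ℝ≥0∞} {p q r : ℝ} (hp : 1 ≤ p) (hq : 1 ≤ q)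
    (hr : 0 < r) (hpqr : 1 / p + 1 / q = 1 + 1 / r)
    (hK : Measurable K) (hF : Measurable F) (hG : Measurable G)
    (hKv : ∀ x u, ∫⁻ v, K (x, u, v) ∂ν ≤ a)
    (hKu : ∀ᵐ v ∂ν, ∀ x, ∫⁻ u, K (x, u, v) ∂μ ≤ w v) (x : X) :
    ∫⁻ v, ∫⁻ u, K (x, u, v) * F u * G v ∂μ ∂ν ≤
      (∫⁻ v, ∫⁻ u, K (x, u, v) * F u ^ p * G v ^ q ∂μ ∂ν) ^ (1 / r) *
        ((a * ∫⁻ u, F u ^ p ∂μ) ^ (1 - 1 / q) * (∫⁻ v, G v ^ q * w v ∂ν) ^ (1 - 1 / p)) := by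
  have := lintegral_mul_mul_le_young (m := ν.prod μ) (k := fun z => K (x, z.2, z.1))
    (F := fun z => F z.2) (G := fun z => G z.1) (by fun_prop) (by fun_prop) (by fun_prop)
    hp hq hr hpqr
  rw [lintegral_prod _ (by fun_prop), lintegral_prod _ (by fun_prop),
    lintegral_prod _ (by fun_prop), lintegral_prod _ (by fun_prop)] at this
  refine this.trans ?_
  rw [mul_assoc]
  obtain ⟨-, h₂, h₃⟩ := young_exponents_nonneg hp hq hr
  gcongr _ * (?_ ^ _ * ?_ ^ _)
  · exact lintegral_lintegral_kernel_mul_left_le (F := fun u => F u ^ p) hK (by fun_prop) hKv x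
  · exact lintegral_lintegral_kernel_mul_right_le (G := fun v => G v ^ q) hK hKu x

theorem lintegral_kernel_young {a : ℝ≥0∞} {p q r : ℝ} (hp : 1 ≤ p) (hq : 1 ≤ q) (hr : 0 < r)
    (hpqr : 1 / p + 1 / q = 1 + 1 / r)
    (hK : Measurable K) (hF : Measurable F) (hG : Measurable G) (hw : Measurable w)
    (hKv : ∀ x u, ∫⁻ v, K (x, u, v) ∂ν ≤ a)
    (hKu : ∀ᵐ v ∂ν, ∀ x, ∫⁻ u, K (x, u, v) ∂μ ≤ w v)
    (hKx : ∀ᵐ v ∂ν, ∀ u, ∫⁻ x, K (x, u, v) ∂ρ ≤ w v) :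
    (∫⁻ x, (∫⁻ v, ∫⁻ u, K (x, u, v) * F u * G v ∂μ ∂ν) ^ r ∂ρ) ^ (1 / r) ≤
      a ^ (1 - 1 / q) * (∫⁻ u, F u ^ p ∂μ) ^ (1 / p) * (∫⁻ v, G v ^ q * w v ∂ν) ^ (1 / q) := by
  obtain ⟨h₁, h₂, h₃⟩ := young_exponents_nonneg hp hq hr
  set A := ∫⁻ u, F u ^ p ∂μ
  set B := ∫⁻ v, G v ^ q * w v ∂ν
  set C := (a * A) ^ (1 - 1 / q) * B ^ (1 - 1 / p) with hC
  set I : X → ℝ≥0∞ := fun x => ∫⁻ v, ∫⁻ u, K (x, u, v) * F u ^ p * G v ^ q ∂μ ∂ν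
  have hI : Measurable I := by fun_prop
  have hr' : r * (1 / r) = 1 := by field_simp
  calc (∫⁻ x, (∫⁻ v, ∫⁻ u, K (x, u, v) * F u * G v ∂μ ∂ν) ^ r ∂ρ) ^ (1 / r)
      ≤ (∫⁻ x, C ^ r * I x ∂ρ) ^ (1 / r) := by
        gcongr with x
        calc _ ≤ (I x ^ (1 / r) * C) ^ r := by
              gcongr; exact lintegral_lintegral_kernel_mul_mul_le hp hq hr hpqr hK hF hG hKv hKu x
          _ = C ^ r * I x := by
            rw [ENNReal.mul_rpow_of_nonneg _ _ hr.le, ← ENNReal.rpow_mul, mul_comm (1 / r), hr',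
              ENNReal.rpow_one, mul_comm]
    _ ≤ (C ^ r * (A * B)) ^ (1 / r) := by
        rw [lintegral_const_mul _ hI]
        gcongr
        exact lintegral_lintegral_lintegral_kernel_le hK (by fun_prop) (by fun_prop) hw hKx
    _ = a ^ (1 - 1 / q) * A ^ (1 / p) * B ^ (1 / q) := by
        have hA : A ^ (1 / p) = A ^ (1 - 1 / q) * A ^ (1 / r) := by
          rw [← ENNReal.rpow_add_of_nonneg _ _ h₂ h₁]; congr 1; linarith
        have hB : B ^ (1 / q) = B ^ (1 - 1 / p) * B ^ (1 / r) := by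
          rw [← ENNReal.rpow_add_of_nonneg _ _ h₃ h₁]; congr 1; linarith
        rw [ENNReal.mul_rpow_of_nonneg _ _ h₁, ← ENNReal.rpow_mul, hr', ENNReal.rpow_one, hC,
          ENNReal.mul_rpow_of_nonneg _ _ h₂, ENNReal.mul_rpow_of_nonneg _ _ h₁, hA, hB]
        ring

end KernelYoung

noncomputable def expNegMulCosh (w s : ℝ) : ℝ≥0∞ := ENNReal.ofReal (exp (-w * cosh s))

section ExpNegMulCosh

variable {w : ℝ}

@[fun_prop]
lemma measurable_expNegMulCosh : Measurable (expNegMulCosh w) := by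
  unfold expNegMulCosh; fun_prop

lemma expNegMulCosh_neg (s : ℝ) : expNegMulCosh w (-s) = expNegMulCosh w s := by
  rw [expNegMulCosh, cosh_neg, expNegMulCosh]

lemma expNegMulCosh_anti {v : ℝ} (hwv : w ≤ v) (s : ℝ) :
    expNegMulCosh v s ≤ expNegMulCosh w s :=
  ENNReal.ofReal_le_ofReal (exp_le_exp.2 (by nlinarith [one_le_cosh s]))

lemma expNegMulCosh_le_exp_neg (hw : 0 ≤ w) (s : ℝ) :
    expNegMulCosh w s ≤ ENNReal.ofReal (exp (-w)) :=
  ENNReal.ofReal_le_ofReal (exp_le_exp.2 (by nlinarith [one_le_cosh s]))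

lemma sq_div_four_le_cosh (t : ℝ) : t ^ 2 / 4 ≤ cosh t := by
  rw [← cosh_abs, cosh_eq]
  linarith [quadratic_le_exp_of_nonneg (abs_nonneg t), exp_pos (-|t|), sq_abs t, abs_nonneg t]

lemma integrable_exp_neg_mul_cosh (hw : 0 < w) : Integrable fun t => exp (-w * cosh t) := by
  refine (integrable_exp_neg_mul_sq (by positivity : 0 < w / 4)).mono'
    (by fun_prop : Continuous fun t => exp (-w * cosh t)).aestronglyMeasurable
    (ae_of_all _ fun t => ?_)
  rw [norm_of_nonneg (exp_pos _).le, exp_le_exp]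
  nlinarith [sq_div_four_le_cosh t]

lemma lintegral_expNegMulCosh (hw : 0 < w) :
    ∫⁻ t, expNegMulCosh w t = 2 * ENNReal.ofReal (K0 w) := by
  have h := integral_comp_abs (f := fun s => exp (-w * cosh s))
  simp only [cosh_abs] at h
  unfold expNegMulCosh
  rw [← ofReal_integral_eq_lintegral_ofReal (integrable_exp_neg_mul_cosh hw)
    (ae_of_all _ fun _ => (exp_pos _).le), h, ENNReal.ofReal_mul zero_le_two, ENNReal.ofReal_ofNat,
    K0]

lemma setLIntegral_expNegMulCosh_add_le (hw : 0 < w) (c : ℝ) :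
    ∫⁻ t in Ioi 0, expNegMulCosh w (t + c) ≤ 2 * ENNReal.ofReal (K0 w) :=
  (setLIntegral_le_lintegral _ _).trans_eq
    ((lintegral_add_right_eq_self (expNegMulCosh w) c).trans (lintegral_expNegMulCosh hw))

end ExpNegMulCosh

noncomputable def phiMajorant (w x u : ℝ) : ℝ≥0∞ :=
  expNegMulCosh w (x + u - 1) + expNegMulCosh w (x - u + 1) + expNegMulCosh w (x + u + 1) +
    expNegMulCosh w (x - u - 1)

lemma enorm_phiKer_le_phiMajorant {w v : ℝ} (hwv : w ≤ v) (x u : ℝ) :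
    ‖phiKer x u v‖ₑ ≤ phiMajorant w x u := by
  calc ‖phiKer x u v‖ₑ ≤ phiMajorant v x u := by
        simp only [phiMajorant, expNegMulCosh, Real.enorm_eq_ofReal_abs]
        rw [← ENNReal.ofReal_add (by positivity) (by positivity),
          ← ENNReal.ofReal_add (by positivity) (by positivity),
          ← ENNReal.ofReal_add (by positivity) (by positivity)]
        refine ENNReal.ofReal_le_ofReal (abs_le.2 ⟨?_, ?_⟩) <;>
        · unfold phiKer
          linarith [exp_pos (-v * cosh (x + u - 1)), exp_pos (-v * cosh (x - u + 1)),
            exp_pos (-v * cosh (x + u + 1)), exp_pos (-v * cosh (x - u - 1))]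
    _ ≤ phiMajorant w x u := by
        unfold phiMajorant
        gcongr <;> exact expNegMulCosh_anti hwv _

lemma phiMajorant_comm (w x u : ℝ) : phiMajorant w x u = phiMajorant w u x := by
  unfold phiMajorant
  rw [← expNegMulCosh_neg (x - u + 1), ← expNegMulCosh_neg (x - u - 1)]
  ring_nf

lemma phiMajorant_le {v : ℝ} (hv : 0 ≤ v) (x u : ℝ) :
    phiMajorant v x u ≤ 4 * ENNReal.ofReal (exp (-v)) := by
  calc phiMajorant v x u ≤ ENNReal.ofReal (exp (-v)) + ENNReal.ofReal (exp (-v)) +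
        ENNReal.ofReal (exp (-v)) + ENNReal.ofReal (exp (-v)) := by
        unfold phiMajorant
        gcongr <;> exact expNegMulCosh_le_exp_neg hv _
    _ = 4 * ENNReal.ofReal (exp (-v)) := by ring

lemma setLIntegral_phiMajorant_le {w : ℝ} (hw : 0 < w) (u : ℝ) :
    ∫⁻ x in Ioi 0, phiMajorant w x u ≤ 4 * (2 * ENNReal.ofReal (K0 w)) := by
  simp only [phiMajorant, sub_eq_add_neg, add_assoc]
  rw [lintegral_add_left (by fun_prop), lintegral_add_left (by fun_prop),
    lintegral_add_left (by fun_prop)]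
  calc _ ≤ 2 * ENNReal.ofReal (K0 w) + (2 * ENNReal.ofReal (K0 w) +
        (2 * ENNReal.ofReal (K0 w) + 2 * ENNReal.ofReal (K0 w))) := by
        gcongr <;> exact setLIntegral_expNegMulCosh_add_le hw _
    _ = 4 * (2 * ENNReal.ofReal (K0 w)) := by ring

@[fun_prop]
lemma measurable_phiKer : Measurable fun z : ℝ × ℝ × ℝ => phiKer z.1 z.2.1 z.2.2 := by
  unfold phiKer; fun_prop

@[fun_prop]
lemma measurable_K0 : Measurable K0 :=
  ((by fun_prop : Continuous fun z : ℝ × ℝ => exp (-z.1 * cosh z.2)).stronglyMeasurable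
    |>.integral_prod_right' (ν := volume.restrict (Ioi 0))).measurable

lemma K0_nonneg (w : ℝ) : 0 ≤ K0 w :=
  setIntegral_nonneg measurableSet_Ioi fun _ _ => (exp_pos _).le

lemma setLIntegral_enorm_phiKer_dv_le (x u : ℝ) :
    ∫⁻ v in Ioi 0, 4⁻¹ * ‖phiKer x u v‖ₑ ≤ 1 := by
  calc ∫⁻ v in Ioi 0, 4⁻¹ * ‖phiKer x u v‖ₑ ≤ ∫⁻ v in Ioi 0, ENNReal.ofReal (exp (-v)) := by
        refine setLIntegral_mono' measurableSet_Ioi fun v hv => ?_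
        calc 4⁻¹ * ‖phiKer x u v‖ₑ ≤ 4⁻¹ * (4 * ENNReal.ofReal (exp (-v))) := by
              gcongr
              exact (enorm_phiKer_le_phiMajorant le_rfl x u).trans (phiMajorant_le hv.le x u)
          _ = ENNReal.ofReal (exp (-v)) := ENNReal.inv_mul_cancel_left (by norm_num) (by norm_num)
    _ = 1 := by
        rw [← ofReal_integral_eq_lintegral_ofReal (integrableOn_exp_neg_Ioi 0)
          (ae_of_all _ fun _ => (exp_pos _).le), integral_exp_neg_Ioi_zero, ENNReal.ofReal_one]

lemma setLIntegral_enorm_phiKer_dx_le {w v : ℝ} (hw : 0 < w) (hwv : w ≤ v) (u : ℝ) :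
    ∫⁻ x in Ioi 0, 4⁻¹ * ‖phiKer x u v‖ₑ ≤ 2 * ENNReal.ofReal (K0 w) := by
  calc ∫⁻ x in Ioi 0, 4⁻¹ * ‖phiKer x u v‖ₑ ≤ ∫⁻ x in Ioi 0, 4⁻¹ * phiMajorant w x u := by
        gcongr with x; exact enorm_phiKer_le_phiMajorant hwv x u
    _ ≤ 4⁻¹ * (4 * (2 * ENNReal.ofReal (K0 w))) := by
        rw [lintegral_const_mul' _ _ (by norm_num)]
        gcongr
        exact setLIntegral_phiMajorant_le hw u
    _ = 2 * ENNReal.ofReal (K0 w) := ENNReal.inv_mul_cancel_left (by norm_num) (by norm_num)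

lemma setLIntegral_enorm_phiKer_du_le {w v : ℝ} (hw : 0 < w) (hwv : w ≤ v) (x : ℝ) :
    ∫⁻ u in Ioi 0, 4⁻¹ * ‖phiKer x u v‖ₑ ≤ 2 * ENNReal.ofReal (K0 w) := by
  calc ∫⁻ u in Ioi 0, 4⁻¹ * ‖phiKer x u v‖ₑ ≤ ∫⁻ u in Ioi 0, 4⁻¹ * phiMajorant w u x := by
        gcongr with u; exact (enorm_phiKer_le_phiMajorant hwv x u).trans_eq (phiMajorant_comm ..)
    _ ≤ 4⁻¹ * (4 * (2 * ENNReal.ofReal (K0 w))) := by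
        rw [lintegral_const_mul' _ _ (by norm_num)]
        gcongr
        exact setLIntegral_phiMajorant_le hw x
    _ = 2 * ENNReal.ofReal (K0 w) := ENNReal.inv_mul_cancel_left (by norm_num) (by norm_num)

lemma enorm_gconv_le (f g : ℝ → ℝ) (x : ℝ) :
    ‖gconv f g x‖ₑ ≤
      ∫⁻ v in Ioi 0, ∫⁻ u in Ioi 0, 4⁻¹ * ‖phiKer x u v‖ₑ * ‖f u‖ₑ * ‖g v‖ₑ := by
  have h4 : ‖(1 / 4 : ℝ)‖ₑ = 4⁻¹ := by
    rw [one_div, enorm_inv (by norm_num), Real.enorm_eq_ofReal (by norm_num)]; simp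
  calc ‖gconv f g x‖ₑ = 4⁻¹ * ‖∫ v in Ioi 0, ∫ u in Ioi 0, phiKer x u v * f u * g v‖ₑ := by
        rw [gconv, enorm_mul, h4]
    _ ≤ 4⁻¹ * ∫⁻ v in Ioi 0, ∫⁻ u in Ioi 0, ‖phiKer x u v * f u * g v‖ₑ := by
        gcongr
        exact (enorm_integral_le_lintegral_enorm _).trans
          (lintegral_mono fun v => enorm_integral_le_lintegral_enorm _)
    _ = _ := by
        rw [← lintegral_const_mul' _ _ (by norm_num)]
        refine lintegral_congr fun v => ?_
        rw [← lintegral_const_mul' _ _ (by norm_num)]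
        simp only [enorm_mul, mul_assoc]

lemma measurable_gconv {f g : ℝ → ℝ} (hf : Measurable f) (hg : Measurable g) :
    Measurable (gconv f g) := by
  have hintegrand : StronglyMeasurable fun z : (ℝ × ℝ) × ℝ =>
      phiKer z.1.1 z.2 z.1.2 * f z.2 * g z.1.2 :=
    Measurable.stronglyMeasurable (by fun_prop)
  exact ((hintegrand.integral_prod_right' (ν := volume.restrict (Ioi 0))).integral_prod_right'
    (ν := volume.restrict (Ioi 0))).measurable.const_mul _

lemma gconv_congr_ae {f f' : ℝ → ℝ} (h : f =ᵐ[volume.restrict (Ioi 0)] f') (g : ℝ → ℝ) :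
    gconv f g = gconv f' g := by
  ext x
  unfold gconv
  congr 1
  exact integral_congr_ae <| ae_of_all _ fun v =>
    integral_congr_ae <| h.mono fun u hu => by simp only [hu]

theorem eLpNorm_gconv_le {p q r β : ℝ} (hp : 1 ≤ p) (hq : 1 ≤ q) (hr : 0 < r)
    (hpqr : 1 / p + 1 / q = 1 + 1 / r) (hβ : β ∈ Ioc (0 : ℝ) 1) {f g : ℝ → ℝ}
    (hf : Measurable f) (hg : Measurable g) :
    eLpNorm (gconv f g) (ENNReal.ofReal r) (volume.restrict (Ioi 0)) ≤
      2 ^ (1 / q) * eLpNorm f (ENNReal.ofReal p) (volume.restrict (Ioi 0)) *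
        (∫⁻ v in Ioi 0, ‖g v‖ₑ ^ q * ENNReal.ofReal (K0 (β * v))) ^ (1 / q) := by
  have hβv : ∀ᵐ v ∂(volume.restrict (Ioi (0 : ℝ))), 0 < β * v ∧ β * v ≤ v :=
    (ae_restrict_mem measurableSet_Ioi).mono fun v (hv : 0 < v) =>
      ⟨mul_pos hβ.1 hv, mul_le_of_le_one_left hv.le hβ.2⟩
  have young := lintegral_kernel_young (ρ := volume.restrict (Ioi 0))
    (μ := volume.restrict (Ioi 0)) (ν := volume.restrict (Ioi 0))
    (K := fun z => 4⁻¹ * ‖phiKer z.1 z.2.1 z.2.2‖ₑ) (F := fun u => ‖f u‖ₑ) (G := fun v => ‖g v‖ₑ)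
    (w := fun v => 2 * ENNReal.ofReal (K0 (β * v))) hp hq hr hpqr (by fun_prop) (by fun_prop)
    (by fun_prop) (by fun_prop)
    (fun x u => setLIntegral_enorm_phiKer_dv_le x u)
    (hβv.mono fun v hv x => setLIntegral_enorm_phiKer_du_le hv.1 hv.2 x)
    (hβv.mono fun v hv u => setLIntegral_enorm_phiKer_dx_le hv.1 hv.2 u)
  have hweight : ∫⁻ v in Ioi 0, ‖g v‖ₑ ^ q * (2 * ENNReal.ofReal (K0 (β * v))) =
      2 * ∫⁻ v in Ioi 0, ‖g v‖ₑ ^ q * ENNReal.ofReal (K0 (β * v)) := by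
    simp only [mul_left_comm _ (2 : ℝ≥0∞)]
    exact lintegral_const_mul _ (by fun_prop)
  rw [eLpNorm_eq_lintegral_rpow_enorm_toReal (ENNReal.ofReal_pos.2 hr).ne' ENNReal.ofReal_ne_top,
    eLpNorm_eq_lintegral_rpow_enorm_toReal (ENNReal.ofReal_pos.2 (by linarith)).ne'
      ENNReal.ofReal_ne_top,
    ENNReal.toReal_ofReal hr.le, ENNReal.toReal_ofReal (by linarith)]
  calc (∫⁻ x in Ioi 0, ‖gconv f g x‖ₑ ^ r) ^ (1 / r)
      ≤ (∫⁻ x in Ioi 0, (∫⁻ v in Ioi 0, ∫⁻ u in Ioi 0,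
          4⁻¹ * ‖phiKer x u v‖ₑ * ‖f u‖ₑ * ‖g v‖ₑ) ^ r) ^ (1 / r) := by
        gcongr with x
        exact enorm_gconv_le f g x
    _ ≤ _ := young
    _ = _ := by
        rw [hweight, ENNReal.one_rpow, one_mul, ENNReal.mul_rpow_of_nonneg _ _ (by positivity)]
        ring


lemma MeasureTheory.MemLp.eLpNorm_ofReal_eq_integral_rpow_abs {α : Type*} [MeasurableSpace α]
    {μ : Measure α} {f : α → ℝ} {p : ℝ} (hp : 0 < p) (hf : MemLp f (ENNReal.ofReal p) μ) :
    eLpNorm f (ENNReal.ofReal p) μ = ENNReal.ofReal ((∫ x, |f x| ^ p ∂μ) ^ (1 / p)) := by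
  rw [hf.eLpNorm_eq_integral_rpow_norm (ENNReal.ofReal_pos.2 hp).ne' ENNReal.ofReal_ne_top,
    ENNReal.toReal_ofReal hp.le, one_div]
  simp only [Real.norm_eq_abs]

lemma ofReal_integral_abs_rpow_mul_eq_lintegral {α : Type*} [MeasurableSpace α] {μ : Measure α}
    {g k : α → ℝ} {q : ℝ} (hq : 0 ≤ q) (hk : ∀ x, 0 ≤ k x)
    (hint : Integrable (fun x => |g x| ^ q * k x) μ) :
    ENNReal.ofReal (∫ x, |g x| ^ q * k x ∂μ) = ∫⁻ x, ‖g x‖ₑ ^ q * ENNReal.ofReal (k x) ∂μ := by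
  rw [ofReal_integral_eq_lintegral_ofReal hint
    (ae_of_all _ fun x => mul_nonneg (by positivity) (hk x))]
  refine lintegral_congr fun x => ?_
  rw [ENNReal.ofReal_mul (by positivity), Real.enorm_eq_ofReal_abs,
    ENNReal.ofReal_rpow_of_nonneg (abs_nonneg _) hq]

theorem gconv_young_inequality (p q r β : ℝ) (hp : 1 < p) (hq : 1 < q) (hr : 1 < r)
    (hpqr : 1 / p + 1 / q = 1 + 1 / r) (hβ : β ∈ Set.Ioc (0 : ℝ) 1)
    (f g : ℝ → ℝ)
    (hf : MeasureTheory.MemLp f (ENNReal.ofReal p)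
      (MeasureTheory.volume.restrict (Set.Ioi 0)))
    (hg : Measurable g)
    (hgK : MeasureTheory.IntegrableOn (fun v => |g v| ^ q * K0 (β * v)) (Set.Ioi 0)) :
    MeasureTheory.MemLp (gconv f g) (ENNReal.ofReal r)
      (MeasureTheory.volume.restrict (Set.Ioi 0)) ∧
    (∫ x in Set.Ioi (0 : ℝ), |gconv f g x| ^ r) ^ (1 / r) ≤
      2 ^ (1 / q) * (∫ x in Set.Ioi (0 : ℝ), |f x| ^ p) ^ (1 / p) *
        (∫ v in Set.Ioi (0 : ℝ), |g v| ^ q * K0 (β * v)) ^ (1 / q) := by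
  have hr₀ : 0 < r := by linarith
  obtain ⟨f₀, hf₀, hff₀⟩ : ∃ f₀, Measurable f₀ ∧ f =ᵐ[volume.restrict (Ioi 0)] f₀ :=
    ⟨_, hf.aestronglyMeasurable.stronglyMeasurable_mk.measurable, hf.aestronglyMeasurable.ae_eq_mk⟩
  have key := eLpNorm_gconv_le hp.le hq.le hr₀ hpqr hβ hf₀ hg
  rw [← gconv_congr_ae hff₀, ← eLpNorm_congr_ae hff₀,
    ← ofReal_integral_abs_rpow_mul_eq_lintegral (by linarith) (fun v => K0_nonneg _) hgK] at key
  have hmem : MemLp (gconv f g) (ENNReal.ofReal r) (volume.restrict (Ioi 0)) := by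
    refine ⟨(gconv_congr_ae hff₀ g ▸ measurable_gconv hf₀ hg).aestronglyMeasurable,
      key.trans_lt ?_⟩
    have := hf.2
    finiteness
  refine ⟨hmem, ?_⟩
  rw [hmem.eLpNorm_ofReal_eq_integral_rpow_abs hr₀,
    hf.eLpNorm_ofReal_eq_integral_rpow_abs (by linarith)] at key
  have hA : 0 ≤ ∫ x in Ioi 0, |f x| ^ p := integral_nonneg fun _ => by positivity
  have hB : 0 ≤ ∫ v in Ioi 0, |g v| ^ q * K0 (β * v) :=
    integral_nonneg fun v => mul_nonneg (by positivity) (K0_nonneg _)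
  rwa [← ENNReal.ofReal_ofNat 2, ENNReal.ofReal_rpow_of_nonneg (by positivity) (by positivity),
    ENNReal.ofReal_rpow_of_nonneg hB (by positivity), ← ENNReal.ofReal_mul (by positivity),
    ← ENNReal.ofReal_mul (by positivity), ENNReal.ofReal_le_ofReal_iff (by positivity)] at key
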